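/- arXiv:2303.08771 — 2 statements merged into one kernel-verified Lean document; each statement's English description precedes it below -/
import Mathlib

section
/- If a triangle-free graph G has an edge coloring in which no path with 3 edges is monochromatic, then the coloring is strongly woody. Consequently, every triangle-free graph G satisfies ζ(G) ≤ 2·arb(G). -/
open SimpleGraph

/-- A walk is monochromatic under an edge coloring if all its edges get one color. -/
def Monochromatic {V α : Type*} {G : SimpleGraph V} {u v : V}
    (c : Sym2 V → α) (p : G.Walk u v) : Prop :=
  ∃ a, ∀ e ∈ p.edges, c e = a

/-- An edge coloring is strongly woody if no broken cycle (a path of length ≥ 2 whose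
endpoints are adjacent, i.e. a cycle minus one edge) is monochromatic. -/
def StronglyWoody {V α : Type*} (G : SimpleGraph V) (c : Sym2 V → α) : Prop :=
  ∀ ⦃u v : V⦄ (p : G.Walk u v), p.IsPath → 2 ≤ p.length → G.Adj u v →
    ¬ Monochromatic c p

/-- The strong arboricity: least number of colors in a strongly woody edge coloring. -/
noncomputable def strongArboricity {V : Type*} (G : SimpleGraph V) : ℕ :=
  sInf {k | ∃ c : Sym2 V → Fin k, StronglyWoody G c}

/-- An edge coloring is woody if no cycle is monochromatic (each color class is a forest). -/
def Woody {V α : Type*} (G : SimpleGraph V) (c : Sym2 V → α) : Prop :=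
  ∀ ⦃u : V⦄ (p : G.Walk u u), p.IsCycle → ¬ Monochromatic c p

/-- The arboricity: least number of colors in a woody edge coloring. -/
noncomputable def arboricity {V : Type*} (G : SimpleGraph V) : ℕ :=
  sInf {k | ∃ c : Sym2 V → Fin k, Woody G c}

/-- A proper vertex coloring. -/
def ProperColoring {V α : Type*} (G : SimpleGraph V) (f : V → α) : Prop :=
  ∀ ⦃u v : V⦄, G.Adj u v → f u ≠ f v

/-- An acyclic coloring: proper and no cycle uses at most two colors. -/
def AcyclicColoring {V α : Type*} (G : SimpleGraph V) (f : V → α) : Prop :=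
  ProperColoring G f ∧
    ∀ ⦃u : V⦄ (p : G.Walk u u), p.IsCycle →
      ¬ ∃ a b, ∀ x ∈ p.support, f x = a ∨ f x = b

/-- The acyclic chromatic number. -/
noncomputable def acyclicChromaticNumber {V : Type*} (G : SimpleGraph V) : ℕ :=
  sInf {k | ∃ f : V → Fin k, AcyclicColoring G f}

/-- The chromatic number (least number of colors in a proper vertex coloring). -/
noncomputable def chromNum {V : Type*} (G : SimpleGraph V) : ℕ :=
  sInf {k | ∃ f : V → Fin k, ProperColoring G f}

/-- A proper edge coloring: adjacent edges receive distinct colors. -/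
def ProperEdgeColoring {V α : Type*} (G : SimpleGraph V) (c : Sym2 V → α) : Prop :=
  ∀ ⦃u v w : V⦄, G.Adj u v → G.Adj v w → u ≠ w → c s(u, v) ≠ c s(v, w)

/-- The chromatic index: least number of colors in a proper edge coloring. -/
noncomputable def edgeChromNum {V : Type*} (G : SimpleGraph V) : ℕ :=
  sInf {k | ∃ c : Sym2 V → Fin k, ProperEdgeColoring G c}

/-- The 2-arboricity: least number of colors so that every cycle C receives at least
min{|C|, 3} colors. -/
noncomputable def arboricity2 {V : Type*} (G : SimpleGraph V) : ℕ :=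
  sInf {k | ∃ c : Sym2 V → Fin k, ∀ ⦃u : V⦄ (p : G.Walk u u), p.IsCycle →
    min p.length 3 ≤ (p.edges.map c).toFinset.card}

/-- `H` is a minor of `G`: there are disjoint nonempty connected branch sets in `G`,
one for each vertex of `H`, with an edge of `G` between the branch sets of any two
adjacent vertices of `H`. -/
def IsMinorOf {W V : Type*} (H : SimpleGraph W) (G : SimpleGraph V) : Prop :=
  ∃ φ : W → Set V,
    (∀ w, (φ w).Nonempty) ∧
    (∀ w, (G.induce (φ w)).Connected) ∧
    (Pairwise fun w w' => Disjoint (φ w) (φ w')) ∧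
    (∀ ⦃w w'⦄, H.Adj w w' → ∃ a ∈ φ w, ∃ b ∈ φ w', G.Adj a b)

/-- Wagner's characterization: planar = no K₅ minor and no K₃,₃ minor. -/
def Planar {V : Type*} (G : SimpleGraph V) : Prop :=
  ¬ IsMinorOf (completeGraph (Fin 5)) G ∧
    ¬ IsMinorOf (completeBipartiteGraph (Fin 3) (Fin 3)) G

/-- Outerplanar = no K₄ minor and no K₂,₃ minor. -/
def Outerplanar {V : Type*} (G : SimpleGraph V) : Prop :=
  ¬ IsMinorOf (completeGraph (Fin 4)) G ∧
    ¬ IsMinorOf (completeBipartiteGraph (Fin 2) (Fin 3)) G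

section AcyclicDist
variable {V : Type*} [DecidableEq V] {F : SimpleGraph V}

lemma exists_shortest_path {u r : V} (h : F.Reachable u r) :
    ∃ p : F.Walk u r, p.IsPath ∧ p.length = F.dist u r := by
  obtain ⟨w, hw⟩ := h.exists_walk_length_eq_dist
  exact ⟨w.bypass, w.bypass_isPath,
    le_antisymm (hw ▸ w.length_bypass_le) (F.dist_le _)⟩

lemma adj_dist_step (hac : F.IsAcyclic) {u v r : V} (huv : F.Adj u v)
    (hu : F.Reachable u r) (hv : F.Reachable v r) :
    F.dist u r = F.dist v r + 1 ∨ F.dist v r = F.dist u r + 1 := by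
  obtain ⟨p, hp, hpl⟩ := exists_shortest_path hu
  obtain ⟨q, hq, hql⟩ := exists_shortest_path hv
  have hd1 : F.dist v r ≤ F.dist u r + 1 := by
    have := F.dist_le (Walk.cons huv.symm p)
    simpa [hpl] using this
  by_cases hm : u ∈ q.support
  · right
    have hspec := q.take_spec hm
    have hlen : (q.takeUntil u hm).length + (q.dropUntil u hm).length = q.length := by
      have := congrArg Walk.length hspec
      rwa [Walk.length_append] at this
    have ht1 : 1 ≤ (q.takeUntil u hm).length := by
      by_contra h
      have h0 : (q.takeUntil u hm).length = 0 := by omega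
      exact huv.ne' (Walk.eq_of_length_eq_zero h0)
    have := F.dist_le (q.dropUntil u hm)
    omega
  · left
    have hP : (Walk.cons huv q).IsPath := by
      rw [Walk.cons_isPath_iff]; exact ⟨hq, hm⟩
    have := isAcyclic_iff_path_unique.mp hac ⟨p, hp⟩ ⟨Walk.cons huv q, hP⟩
    have hpq : p = Walk.cons huv q := congrArg Subtype.val this
    rw [← hpl, hpq, Walk.length_cons, hql]

lemma valley_eq (hac : F.IsAcyclic) {u w w' r : V} (h1 : F.Adj u w) (h2 : F.Adj u w')
    (hw : F.Reachable w r) (hw' : F.Reachable w' r)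
    (hd : F.dist w r + 1 = F.dist u r) (hd' : F.dist w' r + 1 = F.dist u r) :
    w = w' := by
  obtain ⟨q, hq, hql⟩ := exists_shortest_path hw
  obtain ⟨q', hq', hql'⟩ := exists_shortest_path hw'
  have hm : u ∉ q.support := by
    intro hm
    have hspec := q.take_spec hm
    have hlen : (q.takeUntil u hm).length + (q.dropUntil u hm).length = q.length := by
      have := congrArg Walk.length hspec
      rwa [Walk.length_append] at this
    have := F.dist_le (q.dropUntil u hm)
    omega
  have hm' : u ∉ q'.support := by
    intro hm'
    have hspec := q'.take_spec hm'
    have hlen : (q'.takeUntil u hm').length + (q'.dropUntil u hm').length = q'.length := by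
      have := congrArg Walk.length hspec
      rwa [Walk.length_append] at this
    have := F.dist_le (q'.dropUntil u hm')
    omega
  have hP : (Walk.cons h1 q).IsPath := by rw [Walk.cons_isPath_iff]; exact ⟨hq, hm⟩
  have hP' : (Walk.cons h2 q').IsPath := by rw [Walk.cons_isPath_iff]; exact ⟨hq', hm'⟩
  have := isAcyclic_iff_path_unique.mp hac ⟨Walk.cons h1 q, hP⟩ ⟨Walk.cons h2 q', hP'⟩
  have heq : Walk.cons h1 q = Walk.cons h2 q' := congrArg Subtype.val this
  have hsup := congrArg Walk.support heq
  rw [Walk.support_cons, Walk.support_cons, q.support_eq_cons, q'.support_eq_cons] at hsup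
  exact (List.cons.injEq _ _ _ _).mp ((List.cons.injEq _ _ _ _).mp hsup).2 |>.1

lemma comb (hac : F.IsAcyclic) {r v0 v1 v2 v3 : V}
    (a01 : F.Adj v0 v1) (a12 : F.Adj v1 v2) (a23 : F.Adj v2 v3)
    (h02 : v0 ≠ v2) (h13 : v1 ≠ v3)
    (h0 : F.Reachable v0 r) (h1 : F.Reachable v1 r) (h2 : F.Reachable v2 r)
    (h3 : F.Reachable v3 r)
    (e1 : min (F.dist v0 r) (F.dist v1 r) % 2 = min (F.dist v1 r) (F.dist v2 r) % 2)
    (e2 : min (F.dist v1 r) (F.dist v2 r) % 2 = min (F.dist v2 r) (F.dist v3 r) % 2) :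
    False := by
  rcases adj_dist_step hac a01 h0 h1 with s1 | s1 <;>
  rcases adj_dist_step hac a12 h1 h2 with s2 | s2 <;>
  rcases adj_dist_step hac a23 h2 h3 with s3 | s3 <;>
  first
  | omega
  | exact h02 (valley_eq hac a01.symm a12 h0 h2 (by omega) (by omega))
  | exact h13 (valley_eq hac a12.symm a23 h1 h3 (by omega) (by omega))

end AcyclicDist

section CC
variable {V : Type*} {α : Type*}

def colorClass (G : SimpleGraph V) (c : Sym2 V → α) (a : α) : SimpleGraph V where
  Adj u v := G.Adj u v ∧ c s(u, v) = a
  symm := by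
    refine ⟨?_⟩
    intro u v ⟨h, hc⟩
    exact ⟨h.symm, by rwa [Sym2.eq_swap]⟩
  loopless := ⟨fun v h => G.irrefl h.1⟩

lemma colorClass_le (G : SimpleGraph V) (c : Sym2 V → α) (a : α) :
    colorClass G c a ≤ G := fun _ _ h => h.1

/-- In a woody coloring, each color class is acyclic. -/
lemma colorClass_acyclic {G : SimpleGraph V} {c : Sym2 V → α} (hw : Woody G c) (a : α) :
    (colorClass G c a).IsAcyclic := by
  intro u p hp
  have hsub : ∀ e ∈ p.edges, e ∈ G.edgeSet := fun e he =>
    edgeSet_mono (colorClass_le G c a) (p.edges_subset_edgeSet he)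
  refine hw (p.transfer G hsub) (hp.transfer hsub) ⟨a, ?_⟩
  intro e he
  rw [p.edges_transfer hsub] at he
  have := p.edges_subset_edgeSet he
  induction e with
  | h x y => exact this.2

noncomputable def rdist (G : SimpleGraph V) (c : Sym2 V → α) (a : α) (v : V) : ℕ :=
  (colorClass G c a).dist v ((colorClass G c a).connectedComponentMk v).out

noncomputable def bitc (G : SimpleGraph V) (c : Sym2 V → α) : Sym2 V → Fin 2 :=
  fun e => ⟨(Sym2.lift ⟨fun x y => min (rdist G c (c e) x) (rdist G c (c e) y),
    fun x y => min_comm _ _⟩ e) % 2, Nat.mod_lt _ two_pos⟩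

lemma bitc_eq (G : SimpleGraph V) (c : Sym2 V → α) (x y : V) :
    (bitc G c s(x, y) : ℕ) =
      min (rdist G c (c s(x, y)) x) (rdist G c (c s(x, y)) y) % 2 := by
  simp [bitc]

/-- No monochromatic 3-edge path under the refined coloring. -/
lemma no_mono_P3 {G : SimpleGraph V} {c : Sym2 V → α} (hw : Woody G c)
    ⦃u v : V⦄ (p : G.Walk u v) (hp : p.IsPath) (hl : p.length = 3) :
    ¬ Monochromatic (fun e => (c e, bitc G c e)) p := by
  classical
  rintro ⟨⟨a, b⟩, hab⟩
  cases p with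
  | nil => simp at hl
  | cons h1 p =>
  cases p with
  | nil => simp at hl
  | cons h2 p =>
  cases p with
  | nil => simp at hl
  | cons h3 p =>
  cases p with
  | cons h4 p => simp [Walk.length_cons] at hl
  | nil =>
  rename_i v1 v2
  -- vertices u, v1, v2, v (walk: u -h1- v1 -h2- v2 -h3- v)
  -- extract color facts
  have hc1 : c s(u, v1) = a ∧ (bitc G c s(u, v1) : Fin 2) = b := by
    have := hab s(u, v1) (by simp)
    exact ⟨congrArg Prod.fst this, congrArg Prod.snd this⟩
  have hc2 : c s(v1, v2) = a ∧ (bitc G c s(v1, v2) : Fin 2) = b := by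
    have := hab s(v1, v2) (by simp)
    exact ⟨congrArg Prod.fst this, congrArg Prod.snd this⟩
  have hc3 : c s(v2, v) = a ∧ (bitc G c s(v2, v) : Fin 2) = b := by
    have := hab s(v2, v) (by simp)
    exact ⟨congrArg Prod.fst this, congrArg Prod.snd this⟩
  -- distinctness from path
  have hnd := hp.support_nodup
  simp only [Walk.support_cons, Walk.support_nil, List.nodup_cons, List.mem_cons,
    List.mem_singleton, List.not_mem_nil] at hnd
  have h02 : u ≠ v2 := by tauto
  have h13 : v1 ≠ v := by tauto
  -- color-class adjacency
  set F := colorClass G c a with hF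
  have a01 : F.Adj u v1 := ⟨h1, hc1.1⟩
  have a12 : F.Adj v1 v2 := ⟨h2, hc2.1⟩
  have a23 : F.Adj v2 v := ⟨h3, hc3.1⟩
  -- roots agree
  have hr01 := ConnectedComponent.connectedComponentMk_eq_of_adj a01
  have hr12 := ConnectedComponent.connectedComponentMk_eq_of_adj a12
  have hr23 := ConnectedComponent.connectedComponentMk_eq_of_adj a23
  set r := (F.connectedComponentMk u).out with hrdef
  have hreach : ∀ w : V, F.connectedComponentMk w = F.connectedComponentMk u →
      F.Reachable w r ∧ rdist G c a w = F.dist w r := by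
    intro w hw
    have : F.connectedComponentMk r = F.connectedComponentMk u := by
      rw [hrdef]; exact Quot.out_eq _
    constructor
    · exact ConnectedComponent.exact (hw.trans this.symm)
    · unfold rdist
      rw [← hF, hw, ← hrdef]
  obtain ⟨R0, D0⟩ := hreach u rfl
  obtain ⟨R1, D1⟩ := hreach v1 hr01.symm
  obtain ⟨R2, D2⟩ := hreach v2 (hr12.symm.trans hr01.symm)
  obtain ⟨R3, D3⟩ := hreach v (hr23.symm.trans (hr12.symm.trans hr01.symm))
  -- bit equalities as nat
  have b1 := congrArg (Fin.val) hc1.2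
  have b2 := congrArg (Fin.val) hc2.2
  have b3 := congrArg (Fin.val) hc3.2
  rw [bitc_eq, hc1.1] at b1
  rw [bitc_eq, hc2.1] at b2
  rw [bitc_eq, hc3.1] at b3
  rw [D0, D1] at b1
  rw [D1, D2] at b2
  rw [D2, D3] at b3
  have hacy := colorClass_acyclic hw a
  exact comb hacy a01 a12 a23 h02 h13 R0 R1 R2 R3 (b1.trans b2.symm) (b2.trans b3.symm)

end CC

section Main
variable {V : Type*}

lemma part1 (G : SimpleGraph V) (htf : G.CliqueFree 3) {α : Type*} (c : Sym2 V → α)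
    (h : ∀ ⦃u v : V⦄ (p : G.Walk u v), p.IsPath → p.length = 3 → ¬ Monochromatic c p) :
    StronglyWoody G c := by
  classical
  intro u v p hp hl hadj hm
  cases p with
  | nil => simp at hl
  | cons h1 p =>
  cases p with
  | nil => simp at hl
  | cons h2 p =>
  cases p with
  | nil =>
    -- triangle u, x, v
    rename_i x
    exact htf {u, x, v} (is3Clique_triple_iff.mpr ⟨h1, hadj, h2⟩)
  | cons h3 q =>
  rename_i x1 x2 x3
  obtain ⟨a, ha⟩ := hm
  refine h (Walk.cons h1 (Walk.cons h2 (Walk.cons h3 Walk.nil))) ?_ rfl ⟨a, ?_⟩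
  · have hnd := hp.support_nodup
    simp only [Walk.support_cons, List.nodup_cons, List.mem_cons, not_or] at hnd
    have hsupp := q.start_mem_support
    have hu3 : ¬ u = x3 := fun h => hnd.1.2.2 (h ▸ hsupp)
    have h13 : ¬ x1 = x3 := fun h => hnd.2.1.2 (h ▸ hsupp)
    have h23 : ¬ x2 = x3 := fun h => hnd.2.2.1 (h ▸ hsupp)
    simp only [Walk.isPath_def, Walk.support_cons, Walk.support_nil, List.nodup_cons,
      List.mem_cons, List.mem_singleton, List.not_mem_nil, or_false, List.nodup_nil]
    tauto
  · intro e he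
    apply ha
    simp only [Walk.edges_cons, Walk.edges_nil, List.mem_cons, List.not_mem_nil,
      or_false] at he
    simp only [Walk.edges_cons, List.mem_cons]
    tauto

lemma list_two {β : Type*} {l : List β} (h : 2 ≤ l.length) : ∃ x y t, l = x :: y :: t := by
  match l with
  | x :: y :: t => exact ⟨x, y, t, rfl⟩
  | [] | [x] => simp at h

lemma exists_woody [Fintype V] (G : SimpleGraph V) :
    ∃ k, ∃ c : Sym2 V → Fin k, Woody G c := by
  classical
  refine ⟨Fintype.card (Sym2 V), Fintype.equivFin (Sym2 V), ?_⟩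
  rintro u p hc ⟨a, ha⟩
  have hl : 2 ≤ p.edges.length := by
    rw [p.length_edges]
    have := hc.three_le_length
    omega
  obtain ⟨e1, e2, t, hE⟩ := list_two hl
  have hnd := hc.edges_nodup
  rw [hE] at hnd
  have h1 : (Fintype.equivFin (Sym2 V)) e1 = a := ha e1 (by rw [hE]; simp)
  have h2 : (Fintype.equivFin (Sym2 V)) e2 = a := ha e2 (by rw [hE]; simp)
  have : e1 = e2 := (Fintype.equivFin (Sym2 V)).injective (h1.trans h2.symm)
  simp [this] at hnd

end Main

/-- In a triangle-free graph, an edge coloring with no monochromatic path of 3 edges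
is strongly woody; consequently every triangle-free graph satisfies
ζ(G) ≤ 2 · arb(G). -/
theorem stmt10 {V : Type*} [Fintype V] (G : SimpleGraph V) (htf : G.CliqueFree 3) :
    (∀ (α : Type) (c : Sym2 V → α),
      (∀ ⦃u v : V⦄ (p : G.Walk u v), p.IsPath → p.length = 3 → ¬ Monochromatic c p) →
      StronglyWoody G c) ∧
    strongArboricity G ≤ 2 * arboricity G := by
  classical
  constructor
  · intro α c hc
    exact part1 G htf c hc
  · have hne : {k | ∃ c : Sym2 V → Fin k, Woody G c}.Nonempty := by
      obtain ⟨k, c, hc⟩ := exists_woody G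
      exact ⟨k, c, hc⟩
    have hmem : arboricity G ∈ {k | ∃ c : Sym2 V → Fin k, Woody G c} := Nat.sInf_mem hne
    obtain ⟨c, hc⟩ := hmem
    let f : Fin (arboricity G) × Fin 2 ≃ Fin (2 * arboricity G) :=
      finProdFinEquiv.trans (finCongr (mul_comm (arboricity G) 2))
    have hsw2 : StronglyWoody G (fun e => (c e, bitc G c e)) :=
      part1 G htf _ (fun u v p hp hl => no_mono_P3 hc p hp hl)
    have hsw : StronglyWoody G (fun e => f (c e, bitc G c e)) := by
      intro u v p hp hl hadj hm
      obtain ⟨b, hb⟩ := hm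
      have hle : 2 ≤ p.edges.length := by rw [p.length_edges]; omega
      obtain ⟨e1, e2, t, hE⟩ := list_two hle
      refine hsw2 p hp hl hadj ⟨(c e1, bitc G c e1), fun e he => f.injective ?_⟩
      exact (hb e he).trans (hb e1 (by rw [hE]; simp)).symm
    exact Nat.sInf_le ⟨fun e => f (c e, bitc G c e), hsw⟩
end

section
/- Every graph G satisfies ζ(G) ≤ 4·(arb(G))². -/
open SimpleGraph

/-!
Fix a woody coloring `c` with `ℓ = arb G` colors, so that every color class is a forest, and root
each tree of each class. Recolor an edge of color `i` by `(i, f child, parity of depth child)`, where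
the child is its endpoint farther from the root and `f` is a proper vertex coloring. Depths change by
one along forest edges and parents are unique, so two consecutive edges of a monochromatic path hang
from their common vertex. Such a path therefore has length at most two, and a broken cycle of length
two would have adjacent ends of the same `f`-color. This gives `ζ G ≤ 2 χ(G) ℓ`. Moreover every set
`S` of vertices spans at most `ℓ (|S| - 1)` edges, so greedy coloring gives `χ(G) ≤ 2 ℓ`.
-/

open Finset

namespace SimpleGraph

variable {V : Type*} {H : SimpleGraph V}

noncomputable def depth (H : SimpleGraph V) (v : V) : ℕ :=
  H.dist (H.connectedComponentMk v).out v

lemma reachable_depth_root (H : SimpleGraph V) (v : V) :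
    H.Reachable (H.connectedComponentMk v).out v :=
  ConnectedComponent.exact (Quot.out_eq _)

lemma IsAcyclic.depth_adj (hH : H.IsAcyclic) {u v : V} (h : H.Adj u v) :
    H.depth u = H.depth v + 1 ∨ H.depth v = H.depth u + 1 := by
  have hroot : H.connectedComponentMk v = H.connectedComponentMk u :=
    (ConnectedComponent.sound h.reachable).symm
  unfold depth
  rw [hroot]
  exact hH.dist_eq_dist_add_one_of_adj_of_reachable _ h (H.reachable_depth_root u)

lemma IsAcyclic.eq_penultimate_of_dist_add_one (hH : H.IsAcyclic) {r x y : V}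
    {p : H.Walk r x} (hp : p.IsPath) (hy : H.Adj y x) (hd : H.dist r y + 1 = H.dist r x) :
    y = p.penultimate := by
  classical
  obtain ⟨q, hq, hql⟩ := (p.reachable.trans hy.symm.reachable).exists_path_of_dist
  have hx : x ∉ q.support := fun hx => by
    have := (dist_le (q.takeUntil x hx)).trans (q.length_takeUntil_le_length hx)
    omega
  exact hH.eq_penultimate_of_adj_end hp hy.symm
    (hH.mem_support_of_ne_mem_support_of_adj_of_isPath hp hq hy.symm hx)

lemma IsAcyclic.eq_of_depth_add_one (hH : H.IsAcyclic) {x y z : V} (hy : H.Adj y x)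
    (hz : H.Adj z x) (hdy : H.depth y + 1 = H.depth x) (hdz : H.depth z + 1 = H.depth x) :
    y = z := by
  have root_eq {w : V} (hw : H.Adj w x) :
      H.connectedComponentMk w = H.connectedComponentMk x :=
    ConnectedComponent.sound hw.reachable
  unfold depth at hdy hdz
  rw [root_eq hy] at hdy
  rw [root_eq hz] at hdz
  obtain ⟨p, hp, -⟩ := (H.reachable_depth_root x).exists_path_of_dist
  rw [hH.eq_penultimate_of_dist_add_one hp hy hdy, hH.eq_penultimate_of_dist_add_one hp hz hdz]

lemma IsAcyclic.sum_card_adj_le [DecidableRel H.Adj] (hH : H.IsAcyclic) (S : Finset V) :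
    ∑ v ∈ S, #{w ∈ S | H.Adj v w} ≤ 2 * (#S - 1) := by
  classical
  rcases S.eq_empty_or_nonempty with rfl | hS
  · simp
  obtain ⟨m, hm, hmin⟩ := S.exists_min_image H.depth hS
  calc ∑ v ∈ S, #{w ∈ S | H.Adj v w} = #{p ∈ S ×ˢ S | H.Adj p.1 p.2} := by
        simp only [card_filter, sum_product]
    _ ≤ #((S.erase m) ×ˢ (univ : Finset Bool)) := by
        refine card_le_card_of_injOn
          (fun p => if H.depth p.1 < H.depth p.2 then (p.2, true) else (p.1, false)) ?_ ?_
        · rintro ⟨x, y⟩ hxy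
          simp only [mem_coe, mem_filter, mem_product] at hxy
          obtain ⟨⟨hx, hy⟩, hadj⟩ := hxy
          have := hmin x hx
          have := hmin y hy
          simp only [mem_coe, mem_product, mem_erase, mem_univ, and_true]
          rcases hH.depth_adj hadj with hd | hd
          · rw [if_neg (by omega)]
            exact ⟨fun (hxm : x = m) => by subst hxm; omega, hx⟩
          · rw [if_pos (by omega)]
            exact ⟨fun (hym : y = m) => by subst hym; omega, hy⟩
        · rintro ⟨x₁, y₁⟩ h₁ ⟨x₂, y₂⟩ h₂ heq
          simp only [mem_coe, mem_filter, mem_product] at h₁ h₂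
          have hd₁ := hH.depth_adj h₁.2
          have hd₂ := hH.depth_adj h₂.2
          simp only at heq
          split_ifs at heq with hlt₁ hlt₂ hlt₂ <;> simp only [Prod.mk.injEq] at heq
          · obtain ⟨rfl, -⟩ := heq
            rw [hH.eq_of_depth_add_one h₁.2 h₂.2 (by omega) (by omega)]
          · simp at heq
          · simp at heq
          · obtain ⟨rfl, -⟩ := heq
            rw [hH.eq_of_depth_add_one h₁.2.symm h₂.2.symm (by omega) (by omega)]
    _ = 2 * (#S - 1) := by
        rw [card_product, card_erase_of_mem hm, card_univ, Fintype.card_bool, mul_comm]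

section ChildLabel

variable {K : Type*} [SemilatticeSup K]

/-- The supremum only makes the definition symmetric: on an edge of a forest both of its arguments
are the label of the endpoint farther from the root. -/
noncomputable def childLabel (H : SimpleGraph V) (κ : V → K) : Sym2 V → K × Bool :=
  let label (v : V) : K × Bool := (κ v, (H.depth v).bodd)
  Sym2.lift ⟨fun u v => label (if H.depth u < H.depth v then v else u) ⊔
    label (if H.depth v < H.depth u then u else v), fun _ _ => sup_comm _ _⟩

lemma childLabel_mk_of_depth_lt (κ : V → K) {u v : V} (h : H.depth u < H.depth v) :
    H.childLabel κ s(u, v) = (κ v, (H.depth v).bodd) := by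
  simp [childLabel, h, h.not_gt]

/- Equal labels give the two children equal depth parity. Depths along `x, y, z` alternate, so
either both children are `y`, which has only one parent, or they are `x` and `z`. -/
lemma IsAcyclic.depth_lt_of_childLabel_eq (hH : H.IsAcyclic) (κ : V → K) {x y z : V}
    (hxy : H.Adj x y) (hyz : H.Adj y z) (hxz : x ≠ z)
    (h : H.childLabel κ s(x, y) = H.childLabel κ s(y, z)) :
    H.depth y < H.depth x ∧ H.depth y < H.depth z := by
  rw [Sym2.eq_swap (a := x)] at h
  rcases hH.depth_adj hxy with hx | hy <;> rcases hH.depth_adj hyz with hy' | hz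
  · rw [childLabel_mk_of_depth_lt κ (by omega : H.depth y < H.depth x), Sym2.eq_swap,
      childLabel_mk_of_depth_lt κ (by omega : H.depth z < H.depth y)] at h
    simp [hx] at h
  · omega
  · exact absurd (hH.eq_of_depth_add_one hxy hyz.symm hy.symm hy'.symm) hxz
  · rw [Sym2.eq_swap, childLabel_mk_of_depth_lt κ (by omega : H.depth x < H.depth y),
      childLabel_mk_of_depth_lt κ (by omega : H.depth y < H.depth z)] at h
    simp [hz] at h

lemma IsAcyclic.eq_of_childLabel_eq_of_isPath (hH : H.IsAcyclic) (κ : V → K) {u v : V}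
    {p : H.Walk u v} (hp : p.IsPath) (hlen : 2 ≤ p.length) {a : K × Bool}
    (hlab : ∀ e ∈ p.edges, H.childLabel κ e = a) : κ u = κ v := by
  rcases p with _ | ⟨h₁, _ | ⟨h₂, q⟩⟩
  · simp at hlen
  · simp at hlen
  rename_i m w
  have hlab₁ := hlab s(u, m) (by simp)
  have hlab₂ := hlab s(m, w) (by simp)
  have huw : u ≠ w := by
    rintro rfl
    exact ((Walk.cons_isPath_iff _ _).mp hp).2 (by simp)
  obtain ⟨hmu, hmw⟩ := hH.depth_lt_of_childLabel_eq κ h₁ h₂ huw (hlab₁.trans hlab₂.symm)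
  rcases q with _ | ⟨h₃, q⟩
  · rw [Sym2.eq_swap, childLabel_mk_of_depth_lt κ hmu] at hlab₁
    rw [childLabel_mk_of_depth_lt κ hmw] at hlab₂
    exact congrArg Prod.fst (hlab₁.trans hlab₂.symm)
  · rename_i z
    have hmz : m ≠ z := by
      rintro rfl
      exact ((Walk.cons_isPath_iff _ _).mp ((Walk.cons_isPath_iff _ _).mp hp).1).2 (by simp)
    have hlab₃ := hlab s(w, z) (by simp)
    have := hH.depth_lt_of_childLabel_eq κ h₂ h₃ hmz (hlab₂.trans hlab₃.symm)
    omega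

end ChildLabel

def edgeColorClass {ι : Type*} (G : SimpleGraph V) (c : Sym2 V → ι) (i : ι) : SimpleGraph V where
  Adj u v := G.Adj u v ∧ c s(u, v) = i
  symm := ⟨fun _ _ h => ⟨h.1.symm, by rw [Sym2.eq_swap, h.2]⟩⟩
  loopless := ⟨fun _ h => h.1.ne rfl⟩

variable {ι : Type*} {G : SimpleGraph V} {c : Sym2 V → ι} {i : ι}

@[simp]
lemma edgeColorClass_adj {u v : V} :
    (G.edgeColorClass c i).Adj u v ↔ G.Adj u v ∧ c s(u, v) = i :=
  Iff.rfl

lemma mem_edgeSet_edgeColorClass {e : Sym2 V} :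
    e ∈ (G.edgeColorClass c i).edgeSet ↔ e ∈ G.edgeSet ∧ c e = i := by
  induction e using Sym2.ind
  simp

lemma edgeColorClass_le : G.edgeColorClass c i ≤ G :=
  fun _ _ h => h.1

end SimpleGraph

section Woody

variable {V ι : Type*} {G : SimpleGraph V} {c : Sym2 V → ι}

lemma woody_of_injective (hc : Function.Injective c) : Woody G c := by
  classical
  rintro u p hp ⟨a, ha⟩
  have himage : p.edges.toFinset.image c ⊆ {a} := by
    simpa [Finset.subset_iff] using ha
  have hcard := Finset.card_le_card himage
  rw [Finset.card_image_of_injective _ hc, List.toFinset_card_of_nodup hp.edges_nodup,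
    Walk.length_edges, Finset.card_singleton] at hcard
  have := hp.three_le_length
  omega

lemma Woody.isAcyclic_edgeColorClass (hc : Woody G c) (i : ι) :
    (G.edgeColorClass c i).IsAcyclic := fun _ p hp =>
  hc (p.mapLe edgeColorClass_le) (hp.mapLe _) ⟨i, fun e he => by
    rw [Walk.edges_mapLe_eq_edges] at he
    exact (mem_edgeSet_edgeColorClass.mp (p.edges_subset_edgeSet he)).2⟩

theorem Woody.stronglyWoody_childLabel {α : Type*} [SemilatticeSup α] (hc : Woody G c) {f : V → α}
    (hf : ProperColoring G f) :
    StronglyWoody G fun e => (c e, (G.edgeColorClass c (c e)).childLabel f e) := by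
  rintro u v p hp hlen huv ⟨⟨i, a⟩, ha⟩
  have hcol (e) (he : e ∈ p.edges) : c e = i := congrArg Prod.fst (ha e he)
  have hsub (e) (he : e ∈ p.edges) : e ∈ (G.edgeColorClass c i).edgeSet :=
    mem_edgeSet_edgeColorClass.mpr ⟨p.edges_subset_edgeSet he, hcol e he⟩
  refine hf huv ((hc.isAcyclic_edgeColorClass i).eq_of_childLabel_eq_of_isPath f
    (hp.transfer hsub) (by simpa using hlen) (a := a) fun e he => ?_)
  rw [Walk.edges_transfer] at he
  have := congrArg Prod.snd (ha e he)
  simp only at this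
  rwa [hcol e he] at this

lemma strongArboricity_le_card {K : Type*} [Fintype K] {c : Sym2 V → K}
    (hc : StronglyWoody G c) : strongArboricity G ≤ Fintype.card K :=
  Nat.sInf_le ⟨fun e => Fintype.equivFin K (c e), fun _ _ p hp hlen hadj ⟨a, ha⟩ =>
    hc p hp hlen hadj ⟨(Fintype.equivFin K).symm a, fun e he => by
      rw [← ha e he, Equiv.symm_apply_apply]⟩⟩

theorem Woody.strongArboricity_le {ℓ k : ℕ} {c : Sym2 V → Fin ℓ} (hc : Woody G c)
    {f : V → Fin k} (hf : ProperColoring G f) : strongArboricity G ≤ 2 * k * ℓ :=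
  (strongArboricity_le_card (hc.stronglyWoody_childLabel hf)).trans_eq (by simp; ring)

lemma exists_woody_fin_arboricity [Fintype V] (G : SimpleGraph V) :
    ∃ c : Sym2 V → Fin (arboricity G), Woody G c := by
  classical
  exact Nat.sInf_mem (s := {k | ∃ c : Sym2 V → Fin k, Woody G c})
    ⟨_, _, woody_of_injective (Fintype.equivFin (Sym2 V)).injective⟩

lemma Woody.exists_card_adj_lt [Fintype ι] [DecidableRel G.Adj]
    (hc : Woody G c) {S : Finset V} (hS : S.Nonempty) :
    ∃ v ∈ S, #{w ∈ S | G.Adj v w} < 2 * Fintype.card ι := by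
  classical
  obtain ⟨v₀, hv₀⟩ := hS
  have hι : 0 < Fintype.card ι := Fintype.card_pos_iff.mpr ⟨c s(v₀, v₀)⟩
  have hS : 0 < #S := card_pos.mpr ⟨v₀, hv₀⟩
  refine exists_lt_of_sum_lt ?_
  calc ∑ v ∈ S, #{w ∈ S | G.Adj v w}
      = ∑ i, ∑ v ∈ S, #{w ∈ S | (G.edgeColorClass c i).Adj v w} := by
        rw [sum_comm]
        refine sum_congr rfl fun v _ => ?_
        rw [card_eq_sum_card_fiberwise (f := fun w => c s(v, w)) (t := univ) (by simp)]
        simp [filter_filter]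
    _ ≤ ∑ _i : ι, 2 * (#S - 1) :=
        sum_le_sum fun i _ => (hc.isAcyclic_edgeColorClass i).sum_card_adj_le S
    _ < ∑ _v ∈ S, 2 * Fintype.card ι := by
        simp only [sum_const, card_univ, smul_eq_mul]
        obtain ⟨n, hn⟩ := Nat.exists_add_one_eq.mpr hS
        rw [← hn, Nat.add_sub_cancel]
        nlinarith

-- ℕ-valued, so that the case `S = ∅` does not need `k > 0`.
lemma exists_natColoring_of_forall_exists_card_adj_lt [DecidableRel G.Adj] {k : ℕ}
    (h : ∀ S : Finset V, S.Nonempty → ∃ v ∈ S, #{w ∈ S | G.Adj v w} < k) (S : Finset V) :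
    ∃ f : V → ℕ, (∀ v ∈ S, f v < k) ∧ ∀ u ∈ S, ∀ v ∈ S, G.Adj u v → f u ≠ f v := by
  classical
  induction S using Finset.strongInduction with
  | H S ih =>
  rcases S.eq_empty_or_nonempty with rfl | hS
  · simp
  obtain ⟨v, hv, hdeg⟩ := h S hS
  obtain ⟨f, hfk, hf⟩ := ih (S.erase v) (erase_ssubset hv)
  obtain ⟨b, hbk, hbf⟩ := exists_mem_notMem_of_card_lt_card
    (s := {w ∈ S | G.Adj v w}.image f) (t := range k) (by simpa using card_image_le.trans_lt hdeg)
  have hfree (w) (hw : w ∈ S) (hvw : G.Adj v w) : f w ≠ b := fun hb =>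
    hbf (mem_image.mpr ⟨w, mem_filter.mpr ⟨hw, hvw⟩, hb⟩)
  refine ⟨Function.update f v b, fun w hw => ?_, fun x hx y hy hxy => ?_⟩
  · rw [Function.update_apply]
    split_ifs with hwv
    · exact mem_range.mp hbk
    · exact hfk w (mem_erase.mpr ⟨hwv, hw⟩)
  · simp only [Function.update_apply]
    split_ifs with hxv hyv hyv
    · exact absurd (hxv ▸ hyv ▸ hxy) (G.loopless.irrefl _)
    · exact (hfree y hy (hxv ▸ hxy)).symm
    · exact hfree x hx (hyv ▸ hxy.symm)
    · exact hf x (mem_erase.mpr ⟨hxv, hx⟩) y (mem_erase.mpr ⟨hyv, hy⟩) hxy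

theorem exists_properColoring_of_forall_exists_card_adj_lt [Fintype V] [DecidableRel G.Adj]
    {k : ℕ}
    (h : ∀ S : Finset V, S.Nonempty → ∃ v ∈ S, #{w ∈ S | G.Adj v w} < k) :
    ∃ f : V → Fin k, ProperColoring G f := by
  obtain ⟨f, hfk, hf⟩ := exists_natColoring_of_forall_exists_card_adj_lt h univ
  exact ⟨fun v => ⟨f v, hfk v (mem_univ v)⟩, fun u v huv heq =>
    hf u (mem_univ u) v (mem_univ v) huv (congrArg Fin.val heq)⟩

theorem Woody.exists_properColoring [Fintype V] [Fintype ι] (hc : Woody G c) :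
    ∃ f : V → Fin (2 * Fintype.card ι), ProperColoring G f := by
  classical
  exact exists_properColoring_of_forall_exists_card_adj_lt fun _ hS => hc.exists_card_adj_lt hS

end Woody

/-- Every graph satisfies ζ(G) ≤ 4 · (arb(G))². -/
theorem stmt11 {V : Type*} [Fintype V] (G : SimpleGraph V) :
    strongArboricity G ≤ 4 * arboricity G ^ 2 := by
  obtain ⟨c, hc⟩ := exists_woody_fin_arboricity G
  obtain ⟨f, hf⟩ := hc.exists_properColoring
  calc strongArboricity G ≤ 2 * (2 * Fintype.card (Fin (arboricity G))) * arboricity G :=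
        hc.strongArboricity_le hf
    _ = 4 * arboricity G ^ 2 := by rw [Fintype.card_fin]; ring
end
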